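/- If g : [s₀, ∞) → [0, ∞) satisfies ∫_{s₀}^∞ e^{2ατ} g(τ) dτ < ∞ for some α < 0, and additionally ∫_s^{s+1} e^{2ατ} g(τ) dτ ≤ C e^{2αs} for all s (so that e^{2αs}∫_s^{s+1} g(τ)dτ is bounded), then for any ν ∈ (0,1), ∫_{s₀}^∞ τ^{−ν} e^{2ατ} g(τ)^{1/9} h(τ)^{8/9} dτ < ∞ whenever h ≥ 0 satisfies ∫_s^{s+1} e^{2ατ} h(τ) dτ ≤ C e^{2αs} for all s ≥ s₀, provided ν·9/8 > 1, i.e. ν > 8/9. -/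

import Mathlib

open MeasureTheory Real

theorem weighted_integral_convergence
    (α s₀ C ν : ℝ) (hα : α < 0) (hs₀ : 1 ≤ s₀) (hC : 0 < C)
    (hν : ν ∈ Set.Ioo ((8 : ℝ) / 9) 1)
    (g h : ℝ → ℝ) (hgm : Measurable g) (hhm : Measurable h)
    (hgnn : ∀ τ, s₀ ≤ τ → 0 ≤ g τ) (hhnn : ∀ τ, s₀ ≤ τ → 0 ≤ h τ)
    (hgint : IntegrableOn (fun τ => Real.exp (2 * α * τ) * g τ) (Set.Ici s₀))
    (hgbd : ∀ s, s₀ ≤ s →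
      (∫ τ in Set.Icc s (s + 1), Real.exp (2 * α * τ) * g τ) ≤
        C * Real.exp (2 * α * s))
    (hhint : ∀ s, s₀ ≤ s →
      IntegrableOn (fun τ => Real.exp (2 * α * τ) * h τ) (Set.Icc s (s + 1)))
    (hhbd : ∀ s, s₀ ≤ s →
      (∫ τ in Set.Icc s (s + 1), Real.exp (2 * α * τ) * h τ) ≤
        C * Real.exp (2 * α * s)) :
    IntegrableOn
      (fun τ => τ ^ (-ν) * Real.exp (2 * α * τ) * g τ ^ ((1 : ℝ) / 9) *
        h τ ^ ((8 : ℝ) / 9))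
      (Set.Ici s₀) := by
  -- Step 1: e^{2ατ} h is integrable on [s₀, ∞)
  have hUnion : Set.Ici s₀ = ⋃ n : ℕ, Set.Icc (s₀ + n) (s₀ + n + 1) := by
    ext x
    simp only [Set.mem_Ici, Set.mem_iUnion, Set.mem_Icc]
    constructor
    · intro hx
      refine ⟨⌊x - s₀⌋₊, ?_, ?_⟩
      · have := Nat.floor_le (sub_nonneg.mpr hx)
        linarith
      · have := Nat.lt_floor_add_one (x - s₀)
        linarith
    · rintro ⟨n, h1, _⟩
      have : (0:ℝ) ≤ n := n.cast_nonneg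
      linarith
  have hhInt : IntegrableOn (fun τ => Real.exp (2 * α * τ) * h τ) (Set.Ici s₀) := by
    rw [hUnion]
    apply MeasureTheory.integrableOn_iUnion_of_summable_integral_norm
      (fun n : ℕ => hhint (s₀ + n) (le_add_of_nonneg_right (Nat.cast_nonneg n)))
    have key : ∀ n : ℕ, (∫ x in Set.Icc (s₀ + (n:ℝ)) (s₀ + n + 1),
        ‖Real.exp (2 * α * x) * h x‖) ≤ (C * Real.exp (2 * α * s₀)) * Real.exp (2*α) ^ n := by
      intro n
      have hsn : s₀ ≤ s₀ + (n:ℝ) := by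
        have : (0:ℝ) ≤ n := n.cast_nonneg; linarith
      have heq : (∫ x in Set.Icc (s₀ + (n:ℝ)) (s₀ + n + 1), ‖Real.exp (2 * α * x) * h x‖)
          = ∫ x in Set.Icc (s₀ + (n:ℝ)) (s₀ + n + 1), Real.exp (2 * α * x) * h x := by
        apply setIntegral_congr_fun measurableSet_Icc
        intro x hx
        have hx1 : s₀ ≤ x := le_trans hsn hx.1
        exact norm_of_nonneg (mul_nonneg (Real.exp_pos _).le (hhnn x hx1))
      rw [heq]
      have := hhbd (s₀ + n) hsn
      calc (∫ x in Set.Icc (s₀ + (n:ℝ)) (s₀ + n + 1), Real.exp (2 * α * x) * h x)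
          ≤ C * Real.exp (2 * α * (s₀ + n)) := this
        _ = (C * Real.exp (2 * α * s₀)) * Real.exp (2*α) ^ n := by
            rw [show (2 * α * (s₀ + (n:ℝ))) = 2 * α * s₀ + (n:ℝ) * (2*α) by ring,
              Real.exp_add, Real.exp_nat_mul]
            ring
    apply Summable.of_nonneg_of_le (fun n => integral_nonneg (fun x => norm_nonneg _)) key
    apply Summable.mul_left
    apply summable_geometric_of_lt_one (Real.exp_pos _).le
    exact Real.exp_lt_one_iff.mpr (by linarith)
  -- Step 2: pointwise bound and conclude
  have hbound : IntegrableOn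
      (fun τ => Real.exp (2 * α * τ) * g τ + Real.exp (2 * α * τ) * h τ) (Set.Ici s₀) :=
    hgint.add hhInt
  apply MeasureTheory.Integrable.mono' hbound
  · apply Measurable.aestronglyMeasurable
    fun_prop
  · filter_upwards [ae_restrict_mem measurableSet_Ici] with τ hτ
    have hτ1 : (1:ℝ) ≤ τ := le_trans hs₀ hτ
    have hτ0 : (0:ℝ) < τ := lt_of_lt_of_le one_pos hτ1
    have hg0 := hgnn τ hτ
    have hh0 := hhnn τ hτ
    have he0 : (0:ℝ) ≤ Real.exp (2 * α * τ) := (Real.exp_pos _).le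
    have hpow : (0:ℝ) ≤ τ ^ (-ν) := Real.rpow_nonneg hτ0.le _
    have hnn : 0 ≤ τ ^ (-ν) * Real.exp (2 * α * τ) * g τ ^ ((1:ℝ)/9) * h τ ^ ((8:ℝ)/9) := by
      have := Real.rpow_nonneg hg0 ((1:ℝ)/9)
      have := Real.rpow_nonneg hh0 ((8:ℝ)/9)
      positivity
    rw [norm_of_nonneg hnn]
    have hτν : τ ^ (-ν) ≤ 1 :=
      Real.rpow_le_one_of_one_le_of_nonpos hτ1 (neg_nonpos.mpr (by linarith [hν.1, hν.2] :
        (0:ℝ) ≤ ν))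
    have hexp_split : Real.exp (2 * α * τ) =
        Real.exp (2 * α * τ) ^ ((1:ℝ)/9) * Real.exp (2 * α * τ) ^ ((8:ℝ)/9) := by
      rw [← Real.rpow_add (Real.exp_pos _)]
      norm_num
    have hAM : Real.exp (2 * α * τ) * g τ ^ ((1:ℝ)/9) * h τ ^ ((8:ℝ)/9)
        ≤ Real.exp (2 * α * τ) * g τ + Real.exp (2 * α * τ) * h τ := by
      have h1 : Real.exp (2 * α * τ) * g τ ^ ((1:ℝ)/9) * h τ ^ ((8:ℝ)/9)
          = (Real.exp (2 * α * τ) * g τ) ^ ((1:ℝ)/9) *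
            (Real.exp (2 * α * τ) * h τ) ^ ((8:ℝ)/9) := by
        rw [Real.mul_rpow he0 hg0, Real.mul_rpow he0 hh0]
        nth_rewrite 1 [hexp_split]
        ring
      rw [h1]
      have h2 := Real.geom_mean_le_arith_mean2_weighted (by norm_num : (0:ℝ) ≤ 1/9)
        (by norm_num : (0:ℝ) ≤ 8/9) (mul_nonneg he0 hg0) (mul_nonneg he0 hh0)
        (by norm_num : (1:ℝ)/9 + 8/9 = 1)
      nlinarith [mul_nonneg he0 hg0, mul_nonneg he0 hh0]
    have hrest : 0 ≤ Real.exp (2 * α * τ) * g τ ^ ((1:ℝ)/9) * h τ ^ ((8:ℝ)/9) := by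
      have := Real.rpow_nonneg hg0 ((1:ℝ)/9)
      have := Real.rpow_nonneg hh0 ((8:ℝ)/9)
      positivity
    calc τ ^ (-ν) * Real.exp (2 * α * τ) * g τ ^ ((1:ℝ)/9) * h τ ^ ((8:ℝ)/9)
        = τ ^ (-ν) * (Real.exp (2 * α * τ) * g τ ^ ((1:ℝ)/9) * h τ ^ ((8:ℝ)/9)) := by ring
      _ ≤ 1 * (Real.exp (2 * α * τ) * g τ ^ ((1:ℝ)/9) * h τ ^ ((8:ℝ)/9)) :=
          mul_le_mul_of_nonneg_right hτν hrest
      _ = Real.exp (2 * α * τ) * g τ ^ ((1:ℝ)/9) * h τ ^ ((8:ℝ)/9) := one_mul _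
      _ ≤ Real.exp (2 * α * τ) * g τ + Real.exp (2 * α * τ) * h τ := hAM
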